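/- arXiv:2106.11871 — 2 statements merged into one kernel-verified Lean document; each statement's English description precedes it below -/
import Mathlib

section
/- Let n ≥ 3, k ≥ 1, and 0 < ε < 1/(100k). For every linear map L = (L_1,...,L_k) : ℝⁿ → (ℝⁿ)^k with det L_i ≥ 0 for each i and satisfying ‖L‖ⁿ ≤ (1+ε) Σ_{i=1}^k det L_i, there exists an index i_0 such that ‖L_{i_0}‖ⁿ ≤ (1 + 7k√ε) det L_{i_0}, ‖L_{i_0}‖ ≥ ‖L‖/(1+ε), and ‖L_i‖ ≤ 5√k ε^{1/4} ‖L‖ for all i ≠ i_0. -/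
/-!
Write `M = ‖L‖` and let `rᵢ = |Lᵢ|_HS / √n` be the normalized Hilbert–Schmidt norms. Hadamard's
inequality and AM–GM give `det Lᵢ ≤ rᵢⁿ`, and Pythagoras in `(ℝⁿ)^k` gives `∑ rᵢ² ≤ M²`. If `i₀`
maximizes `rᵢ`, then `∑ det Lᵢ ≤ r_{i₀}^(n-2) M²`, so almost calibration gives
`M^(n-2) ≤ (1 + ε) r_{i₀}^(n-2)`, hence `M ≤ (1 + ε) r_{i₀}`; the other `rᵢ` then carry so little
that `det L_{i₀} ≥ (1 - 3ε) Mⁿ`. Since `|det T| ‖v‖ ≤ ‖T v‖ ‖T‖^(n-1)`, this gives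
`‖L_{i₀} v‖ ≥ (1 - 3ε) M ‖v‖`, leaving at most `√(1 - (1 - 3ε)²) M ‖v‖` for every other component.
-/

open Finset

theorem prod_le_mean_pow {ι : Type*} [Fintype ι] (z : ι → ℝ) (hz : ∀ i, 0 ≤ z i) :
    ∏ i, z i ≤ ((∑ i, z i) / Fintype.card ι) ^ Fintype.card ι := by
  rcases isEmpty_or_nonempty ι with hι | hι
  · simp
  have hcard : Fintype.card ι ≠ 0 := Fintype.card_ne_zero
  have amgm := Real.geom_mean_le_arith_mean univ (fun _ => 1) z (fun _ _ => zero_le_one)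
    (by simp [Fintype.card_pos]) (fun i _ => hz i)
  simp only [Real.rpow_one, sum_const, card_univ, nsmul_eq_mul, mul_one, one_mul] at amgm
  calc ∏ i, z i = ((∏ i, z i) ^ ((Fintype.card ι : ℝ)⁻¹)) ^ Fintype.card ι :=
        (Real.rpow_inv_natCast_pow (prod_nonneg fun i _ => hz i) hcard).symm
    _ ≤ _ := by gcongr; exact Real.rpow_nonneg (prod_nonneg fun i _ => hz i) _

section Determinant

variable {E : Type*} [NormedAddCommGroup E] [InnerProductSpace ℝ E] {n : ℕ}

theorem abs_det_le_prod_norm (b : OrthonormalBasis (Fin n) ℝ E) (T : E →ₗ[ℝ] E) :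
    |LinearMap.det T| ≤ ∏ i, ‖T (b i)‖ := by
  have : Fact (Module.finrank ℝ E = n) := ⟨by simpa using Module.finrank_eq_card_basis b.toBasis⟩
  have hdet : b.toBasis.det (T ∘ b) = LinearMap.det T := by
    rw [← b.coe_toBasis, Module.Basis.det_comp, Module.Basis.det_self, mul_one]
  rw [← hdet, ← b.toBasis.orientation.volumeForm_robust' b]
  exact b.toBasis.orientation.abs_volumeForm_apply_le _

/-- The normalized Hilbert–Schmidt norm `|T|_HS / √n`. -/
noncomputable def rmsNorm (b : OrthonormalBasis (Fin n) ℝ E) (T : E →L[ℝ] E) : ℝ :=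
  √((∑ m, ‖T (b m)‖ ^ 2) / n)

theorem abs_det_le_rmsNorm_pow (b : OrthonormalBasis (Fin n) ℝ E) (T : E →L[ℝ] E) :
    |LinearMap.det (T : E →ₗ[ℝ] E)| ≤ rmsNorm b T ^ n := by
  have hprod : (∏ m, ‖T (b m)‖) ^ 2 ≤ (rmsNorm b T ^ n) ^ 2 := by
    rw [← prod_pow, ← pow_mul, mul_comm, pow_mul, rmsNorm, Real.sq_sqrt (by positivity)]
    simpa using prod_le_mean_pow (fun m => ‖T (b m)‖ ^ 2) (fun m => sq_nonneg _)
  exact (abs_det_le_prod_norm b T).trans <|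
    (pow_le_pow_iff_left₀ (prod_nonneg fun m _ => norm_nonneg _)
      (pow_nonneg (Real.sqrt_nonneg _) n) two_ne_zero).mp hprod

theorem rmsNorm_le_opNorm (b : OrthonormalBasis (Fin n) ℝ E) (T : E →L[ℝ] E) :
    rmsNorm b T ≤ ‖T‖ := by
  rw [rmsNorm, Real.sqrt_le_left (norm_nonneg T)]
  refine div_le_of_le_mul₀ n.cast_nonneg (sq_nonneg _) ?_
  calc ∑ m, ‖T (b m)‖ ^ 2 ≤ ∑ _m : Fin n, ‖T‖ ^ 2 := by
        gcongr with m
        simpa using T.le_opNorm (b m)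
    _ = ‖T‖ ^ 2 * n := by simp [mul_comm]

theorem sum_rmsNorm_sq_le {ι : Type*} [Fintype ι] (b : OrthonormalBasis (Fin n) ℝ E)
    (L : E →L[ℝ] PiLp 2 (fun _ : ι => E)) (Li : ι → E →L[ℝ] E) (hLi : ∀ i v, Li i v = L v i) :
    ∑ i, rmsNorm b (Li i) ^ 2 ≤ ‖L‖ ^ 2 := by
  have hsq : ∀ i, rmsNorm b (Li i) ^ 2 = (∑ m, ‖L (b m) i‖ ^ 2) / n := fun i => by
    rw [rmsNorm, Real.sq_sqrt (by positivity)]; simp only [hLi]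
  rw [sum_congr rfl fun i _ => hsq i, ← sum_div, sum_comm]
  refine div_le_of_le_mul₀ n.cast_nonneg (sq_nonneg _) ?_
  calc ∑ m, ∑ i, ‖L (b m) i‖ ^ 2 ≤ ∑ _m : Fin n, ‖L‖ ^ 2 := by
        gcongr with m
        rw [← PiLp.norm_sq_eq_of_L2]
        gcongr
        simpa using L.le_opNorm (b m)
    _ = ‖L‖ ^ 2 * n := by simp [mul_comm]

variable [FiniteDimensional ℝ E]

theorem abs_det_mul_norm_le (T : E →L[ℝ] E) (v : E) :
    |LinearMap.det (T : E →ₗ[ℝ] E)| * ‖v‖ ≤ ‖T v‖ * ‖T‖ ^ (Module.finrank ℝ E - 1) := by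
  rcases eq_or_ne v 0 with rfl | hv
  · simp
  obtain ⟨m, hm⟩ : ∃ m, Module.finrank ℝ E = m + 1 :=
    Nat.exists_eq_add_one.mpr (Module.finrank_pos_iff_exists_ne_zero.mpr ⟨v, hv⟩)
  set u := ‖v‖⁻¹ • v
  -- Hadamard's inequality in an orthonormal basis whose first vector is `v / ‖v‖`.
  obtain ⟨b, hb⟩ := Orthonormal.exists_orthonormalBasis_extension_of_card_eq (𝕜 := ℝ)
    (ι := Fin (m + 1)) (v := fun _ => u) (s := {0}) (by simpa using hm)
    ⟨fun _ => norm_smul_inv_norm hv, fun i j hij => absurd (Subsingleton.elim i j) hij⟩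
  have hTu : ‖T u‖ * ‖v‖ = ‖T v‖ := by
    rw [map_smul, norm_smul, norm_inv, norm_norm]
    field_simp
  calc |LinearMap.det (T : E →ₗ[ℝ] E)| * ‖v‖ ≤ (∏ i, ‖T (b i)‖) * ‖v‖ := by
        gcongr; exact abs_det_le_prod_norm b _
    _ ≤ (‖T u‖ * ‖T‖ ^ m) * ‖v‖ := by
        rw [Fin.prod_univ_succ, hb 0 rfl]
        gcongr
        calc ∏ i : Fin m, ‖T (b i.succ)‖ ≤ ∏ _i : Fin m, ‖T‖ := by
              gcongr with i; simpa using T.le_opNorm (b i.succ)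
          _ = ‖T‖ ^ m := by simp
    _ = ‖T v‖ * ‖T‖ ^ (Module.finrank ℝ E - 1) := by rw [hm, Nat.add_sub_cancel, ← hTu]; ring

theorem mul_norm_le_norm_apply_of_mul_pow_le_det {T : E →L[ℝ] E} {M c : ℝ} (hM : 0 ≤ M)
    (hTM : ‖T‖ ≤ M) (hdet : c * M ^ Module.finrank ℝ E ≤ LinearMap.det (T : E →ₗ[ℝ] E))
    (v : E) : c * M * ‖v‖ ≤ ‖T v‖ := by
  rcases eq_or_ne v 0 with rfl | hv
  · simp
  rcases hM.eq_or_lt with rfl | hMpos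
  · simp
  obtain ⟨m, hm⟩ : ∃ m, Module.finrank ℝ E = m + 1 :=
    Nat.exists_eq_add_one.mpr (Module.finrank_pos_iff_exists_ne_zero.mpr ⟨v, hv⟩)
  rw [hm] at hdet
  refine le_of_mul_le_mul_right ?_ (pow_pos hMpos m)
  calc c * M * ‖v‖ * M ^ m = c * M ^ (m + 1) * ‖v‖ := by ring
    _ ≤ |LinearMap.det (T : E →ₗ[ℝ] E)| * ‖v‖ := by gcongr; exact hdet.trans (le_abs_self _)
    _ ≤ ‖T v‖ * ‖T‖ ^ m := by simpa [hm] using abs_det_mul_norm_le T v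
    _ ≤ ‖T v‖ * M ^ m := by gcongr

end Determinant

section PiLp

variable {E : Type*} [NormedAddCommGroup E] [NormedSpace ℝ E] {ι : Type*} [Fintype ι]
  {F : ι → Type*} [∀ i, NormedAddCommGroup (F i)] [∀ i, NormedSpace ℝ (F i)]

theorem opNorm_le_of_apply_eq_apply (L : E →L[ℝ] PiLp 2 F) {i : ι} {T : E →L[ℝ] F i}
    (hT : ∀ v, T v = L v i) : ‖T‖ ≤ ‖L‖ :=
  T.opNorm_le_bound (norm_nonneg L) fun v =>
    hT v ▸ (PiLp.norm_apply_le (L v) i).trans (L.le_opNorm v)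

theorem norm_apply_le_sqrt_one_sub_sq_mul (L : E →L[ℝ] PiLp 2 F) {i j : ι} (hij : i ≠ j)
    {c : ℝ} (hc : 0 ≤ c) (hj : ∀ v, c * ‖L‖ * ‖v‖ ≤ ‖L v j‖) (v : E) :
    ‖L v i‖ ≤ √(1 - c ^ 2) * (‖L‖ * ‖v‖) := by
  have hpair : ‖L v i‖ ^ 2 + ‖L v j‖ ^ 2 ≤ (‖L‖ * ‖v‖) ^ 2 :=
    calc ‖L v i‖ ^ 2 + ‖L v j‖ ^ 2 ≤ ∑ l, ‖L v l‖ ^ 2 :=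
          add_le_sum (f := fun l => ‖L v l‖ ^ 2) (fun _ _ => sq_nonneg _) (mem_univ i)
            (mem_univ j) hij
      _ = ‖L v‖ ^ 2 := (PiLp.norm_sq_eq_of_L2 F (L v)).symm
      _ ≤ (‖L‖ * ‖v‖) ^ 2 := by gcongr; exact L.le_opNorm v
  have hlow : (c * (‖L‖ * ‖v‖)) ^ 2 ≤ ‖L v j‖ ^ 2 := by
    gcongr; rw [← mul_assoc]; exact hj v
  rw [← Real.sqrt_sq (by positivity : 0 ≤ ‖L‖ * ‖v‖), ← Real.sqrt_mul' _ (sq_nonneg _)]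
  exact Real.le_sqrt_of_sq_le (by nlinarith)

end PiLp

theorem sum_pow_le_pow_mul_sum_sq {ι : Type*} (s : Finset ι) {r : ι → ℝ} {R : ℝ} {n : ℕ}
    (hn : 2 ≤ n) (hr : ∀ i ∈ s, 0 ≤ r i) (hR : ∀ i ∈ s, r i ≤ R) :
    ∑ i ∈ s, r i ^ n ≤ R ^ (n - 2) * ∑ i ∈ s, r i ^ 2 := by
  rw [mul_sum]
  refine sum_le_sum fun i hi => ?_
  rw [← Nat.sub_add_cancel hn, pow_add, Nat.add_sub_cancel]
  gcongr
  exacts [hr i hi, hR i hi]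

theorem le_one_add_mul_of_pow_le {M R ε : ℝ} {m : ℕ} (hm : m ≠ 0) (hε : 0 ≤ ε) (hM : 0 ≤ M)
    (hR : 0 ≤ R) (h : M ^ m * M ^ 2 ≤ (1 + ε) * R ^ m * M ^ 2) : M ≤ (1 + ε) * R := by
  rcases hM.eq_or_lt with rfl | hMpos
  · positivity
  replace h := le_of_mul_le_mul_right h (by positivity)
  refine (pow_le_pow_iff_left₀ hM (by positivity) hm).mp (h.trans ?_)
  rw [mul_pow]
  gcongr
  exact le_self_pow₀ (by linarith) hm

theorem one_sub_mul_pow_le {M R d ε : ℝ} {m : ℕ} (hε : 0 ≤ ε) (hR : 0 ≤ R) (hRM : R ≤ M)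
    (hMR : M ≤ (1 + ε) * R) (h : M ^ m * M ^ 2 ≤ (1 + ε) * (d + R ^ m * (M ^ 2 - R ^ 2))) :
    (1 - 3 * ε) * (M ^ m * M ^ 2) ≤ d := by
  have hM : 0 ≤ M := hR.trans hRM
  have hMR2 : M ^ 2 ≤ (1 + ε) ^ 2 * R ^ 2 := by rw [← mul_pow]; gcongr
  have hgap : 0 ≤ M ^ 2 - R ^ 2 := by nlinarith
  have hX : R ^ m * (M ^ 2 - R ^ 2) ≤ M ^ m * (M ^ 2 - R ^ 2) := by gcongr
  have hMm : 0 ≤ M ^ m := by positivity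
  have hX' : (1 + ε) * (M ^ m * (M ^ 2 - R ^ 2)) ≤ (2 * ε + ε ^ 2) * (M ^ m * M ^ 2) := by
    nlinarith [mul_nonneg (mul_nonneg hε hMm) hgap, mul_le_mul_of_nonneg_left hMR2 hMm]
  have hd : (1 + ε) * ((1 - 3 * ε) * (M ^ m * M ^ 2)) ≤ (1 + ε) * d := by
    nlinarith [mul_nonneg (mul_nonneg hε hε) (mul_nonneg hMm (sq_nonneg M))]
  exact le_of_mul_le_mul_left hd (by linarith)

theorem exists_dominant_index {ι : Type*} [Fintype ι] [Nonempty ι] {n : ℕ} (hn : 3 ≤ n)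
    {d r : ι → ℝ} {M ε : ℝ} (hε : 0 ≤ ε) (hM : 0 ≤ M) (hr : ∀ i, 0 ≤ r i)
    (hdr : ∀ i, d i ≤ r i ^ n) (hrM : ∑ i, r i ^ 2 ≤ M ^ 2) (hMd : M ^ n ≤ (1 + ε) * ∑ i, d i) :
    ∃ i₀, M ≤ (1 + ε) * r i₀ ∧ (1 - 3 * ε) * M ^ n ≤ d i₀ := by
  classical
  obtain ⟨i₀, hi₀⟩ := Finite.exists_max r
  have hR₀ : 0 ≤ r i₀ ^ (n - 2) := pow_nonneg (hr i₀) _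
  have hsum (s : Finset ι) : ∑ i ∈ s, d i ≤ r i₀ ^ (n - 2) * ∑ i ∈ s, r i ^ 2 :=
    (sum_le_sum fun i _ => hdr i).trans <|
      sum_pow_le_pow_mul_sum_sq s (by omega) (fun i _ => hr i) (fun i _ => hi₀ i)
  have hpow : M ^ n = M ^ (n - 2) * M ^ 2 := by rw [← pow_add, Nat.sub_add_cancel (by omega)]
  have hRM : r i₀ ≤ M := by
    refine (pow_le_pow_iff_left₀ (hr i₀) hM two_ne_zero).mp (le_trans ?_ hrM)
    exact single_le_sum (f := fun i => r i ^ 2) (fun i _ => sq_nonneg _) (mem_univ i₀)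
  have hMR : M ≤ (1 + ε) * r i₀ := by
    refine le_one_add_mul_of_pow_le (m := n - 2) (by omega) hε hM (hr i₀) ?_
    calc M ^ (n - 2) * M ^ 2 ≤ (1 + ε) * (r i₀ ^ (n - 2) * ∑ i, r i ^ 2) :=
          hpow ▸ hMd.trans (by gcongr; exact hsum univ)
      _ ≤ (1 + ε) * r i₀ ^ (n - 2) * M ^ 2 := by rw [mul_assoc]; gcongr
  refine ⟨i₀, hMR, ?_⟩
  rw [hpow]
  refine one_sub_mul_pow_le hε (hr i₀) hRM hMR ?_
  have hrest : ∑ i ∈ univ.erase i₀, r i ^ 2 ≤ M ^ 2 - r i₀ ^ 2 := by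
    rw [← sum_erase_add _ _ (mem_univ i₀)] at hrM
    linarith
  calc M ^ (n - 2) * M ^ 2 ≤ (1 + ε) * (d i₀ + ∑ i ∈ univ.erase i₀, d i) := by
        rw [← hpow, add_sum_erase _ _ (mem_univ i₀)]; exact hMd
    _ ≤ (1 + ε) * (d i₀ + r i₀ ^ (n - 2) * (M ^ 2 - r i₀ ^ 2)) := by
        gcongr
        exact (hsum _).trans (by gcongr)

theorem one_le_one_add_mul_sqrt_mul_one_sub {k ε : ℝ} (hk : 1 ≤ k) (hε : 0 ≤ ε)
    (hε' : ε ≤ 1 / 100) : 1 ≤ (1 + 7 * k * √ε) * (1 - 3 * ε) := by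
  obtain ⟨s, hs, rfl⟩ : ∃ s, 0 ≤ s ∧ ε = s ^ 2 := ⟨√ε, Real.sqrt_nonneg ε, (Real.sq_sqrt hε).symm⟩
  rw [Real.sqrt_sq hs]
  have hs' : s ≤ 1 / 10 := by nlinarith
  nlinarith [mul_nonneg (mul_nonneg hs hs) (sub_nonneg.mpr hk), mul_nonneg hs (sub_nonneg.mpr hk)]

theorem sqrt_one_sub_one_sub_sq_le {k ε : ℝ} (hk : 1 ≤ k) (hε : 0 ≤ ε) (hε' : ε ≤ 1) :
    √(1 - (1 - 3 * ε) ^ 2) ≤ 5 * √k * ε ^ ((1 : ℝ) / 4) := by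
  have hquarter : (ε ^ ((1 : ℝ) / 4)) ^ 2 = √ε := by
    rw [← Real.rpow_natCast, ← Real.rpow_mul hε, Real.sqrt_eq_rpow]; norm_num
  rw [Real.sqrt_le_left (by positivity), mul_pow, mul_pow, hquarter, Real.sq_sqrt (by linarith)]
  have hε_le : ε ≤ √ε := by
    rw [Real.le_sqrt hε hε]; nlinarith
  nlinarith [Real.sqrt_nonneg ε]

theorem almost_calibrated_linear_map_general (n k : ℕ) (hn : 3 ≤ n) (hk : 1 ≤ k)
    (ε : ℝ) (hε : 0 < ε) (hε' : ε < 1 / (100 * k))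
    (L : EuclideanSpace ℝ (Fin n) →L[ℝ]
        PiLp 2 (fun _ : Fin k => EuclideanSpace ℝ (Fin n)))
    (Li : Fin k → (EuclideanSpace ℝ (Fin n) →L[ℝ] EuclideanSpace ℝ (Fin n)))
    (hLi : ∀ i v, Li i v = L v i)
    (hL : ‖L‖ ^ n ≤ (1 + ε) * ∑ i, LinearMap.det
        ((Li i : EuclideanSpace ℝ (Fin n) →ₗ[ℝ] EuclideanSpace ℝ (Fin n)))) :
    ∃ i₀ : Fin k,
      ‖Li i₀‖ ^ n ≤ (1 + 7 * k * Real.sqrt ε) * LinearMap.det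
          ((Li i₀ : EuclideanSpace ℝ (Fin n) →ₗ[ℝ] EuclideanSpace ℝ (Fin n))) ∧
      ‖L‖ / (1 + ε) ≤ ‖Li i₀‖ ∧
      ∀ i, i ≠ i₀ → ‖Li i‖ ≤ 5 * Real.sqrt k * ε ^ ((1 : ℝ) / 4) * ‖L‖ := by
  have hk₁ : (1 : ℝ) ≤ k := by exact_mod_cast hk
  have hε₁ : ε ≤ 1 / 100 := hε'.le.trans (by gcongr; linarith)
  have : Nonempty (Fin k) := ⟨⟨0, hk⟩⟩
  set b := EuclideanSpace.basisFun (Fin n) ℝ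
  have hLiL (i : Fin k) : ‖Li i‖ ≤ ‖L‖ := opNorm_le_of_apply_eq_apply L (hLi i)
  obtain ⟨i₀, hLr, hdet₀⟩ := exists_dominant_index hn hε.le (norm_nonneg L)
    (fun i => Real.sqrt_nonneg _)
    (fun i => (le_abs_self _).trans (abs_det_le_rmsNorm_pow b (Li i)))
    (sum_rmsNorm_sq_le b L Li hLi) hL
  have hlow (v) : (1 - 3 * ε) * ‖L‖ * ‖v‖ ≤ ‖L v i₀‖ := hLi i₀ v ▸
    mul_norm_le_norm_apply_of_mul_pow_le_det (norm_nonneg L) (hLiL i₀)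
      (by rwa [finrank_euclideanSpace_fin]) v
  refine ⟨i₀, ?_, ?_, fun i hi => ?_⟩
  · calc ‖Li i₀‖ ^ n ≤ ‖L‖ ^ n := by gcongr; exact hLiL i₀
      _ ≤ (1 + 7 * k * √ε) * ((1 - 3 * ε) * ‖L‖ ^ n) := by
          rw [← mul_assoc]
          exact le_mul_of_one_le_left (by positivity)
            (one_le_one_add_mul_sqrt_mul_one_sub hk₁ hε.le hε₁)
      _ ≤ _ := by gcongr
  · rw [div_le_iff₀ (by positivity), mul_comm]
    exact hLr.trans (by gcongr; exact rmsNorm_le_opNorm b _)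
  · refine (Li i).opNorm_le_bound (by positivity) fun v => ?_
    calc ‖Li i v‖ ≤ √(1 - (1 - 3 * ε) ^ 2) * (‖L‖ * ‖v‖) :=
          hLi i v ▸ norm_apply_le_sqrt_one_sub_sq_mul L hi (by linarith) hlow v
      _ ≤ 5 * √k * ε ^ ((1 : ℝ) / 4) * ‖L‖ * ‖v‖ := by
          rw [mul_assoc _ ‖L‖]
          gcongr
          exact sqrt_one_sub_one_sub_sq_le hk₁ hε.le (by linarith)

/-- For `n ≥ 3`, `k ≥ 1`, `0 < ε < 1/(100k)`: a linear map `L = (L₁,…,L_k) : ℝⁿ → (ℝⁿ)^k`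
with `det Lᵢ ≥ 0` and `‖L‖ⁿ ≤ (1+ε) ∑ᵢ det Lᵢ` has an index `i₀` with
`‖L_{i₀}‖ⁿ ≤ (1 + 7k√ε) det L_{i₀}`, `‖L_{i₀}‖ ≥ ‖L‖/(1+ε)`, and
`‖Lᵢ‖ ≤ 5√k ε^{1/4} ‖L‖` for `i ≠ i₀`. -/
theorem almost_calibrated_linear_map (n k : ℕ) (hn : 3 ≤ n) (hk : 1 ≤ k)
    (ε : ℝ) (hε : 0 < ε) (hε' : ε < 1 / (100 * k))
    (L : EuclideanSpace ℝ (Fin n) →L[ℝ]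
        PiLp 2 (fun _ : Fin k => EuclideanSpace ℝ (Fin n)))
    (Li : Fin k → (EuclideanSpace ℝ (Fin n) →L[ℝ] EuclideanSpace ℝ (Fin n)))
    (hLi : ∀ i v, Li i v = L v i)
    (hdet : ∀ i, 0 ≤ LinearMap.det
        ((Li i : EuclideanSpace ℝ (Fin n) →ₗ[ℝ] EuclideanSpace ℝ (Fin n))))
    (hL : ‖L‖ ^ n ≤ (1 + ε) * ∑ i, LinearMap.det
        ((Li i : EuclideanSpace ℝ (Fin n) →ₗ[ℝ] EuclideanSpace ℝ (Fin n)))) :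
    ∃ i₀ : Fin k,
      ‖Li i₀‖ ^ n ≤ (1 + 7 * k * Real.sqrt ε) * LinearMap.det
          ((Li i₀ : EuclideanSpace ℝ (Fin n) →ₗ[ℝ] EuclideanSpace ℝ (Fin n))) ∧
      ‖L‖ / (1 + ε) ≤ ‖Li i₀‖ ∧
      ∀ i, i ≠ i₀ → ‖Li i‖ ≤ 5 * Real.sqrt k * ε ^ ((1 : ℝ) / 4) * ‖L‖ :=
  almost_calibrated_linear_map_general n k hn hk ε hε hε' L Li hLi hL
end

section
/- Let Δ_1, Δ_2 ⊂ ℝⁿ (n ≥ 3) be n-simplices whose intersection Δ = Δ_1 ∩ Δ_2 is an (n−1)-simplex spanning a hyperplane V, and let L, R : ℝⁿ → (ℝⁿ)^k be nonzero linear maps agreeing on V. Suppose ε > 0 is small enough that (1+ε)(1+7k√ε) < 3/2 and 5√k ε^{1/4} < 1/2, and suppose there are indices i_L ≠ i_R with: ‖L_{i_L}‖ⁿ ≤ (1+7k√ε) det L_{i_L}, ‖L‖ ≤ (1+ε)‖L_{i_L}‖, ‖R_{i_L}‖ ≤ 5√k ε^{1/4}‖R‖, and symmetrically for R with index i_R.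 Then a contradiction follows; hence i_L = i_R. -/
/-!
Hadamard's inequality in an orthonormal basis whose first vector is a unit vector `u` gives
`|det T| ≤ ‖T u‖ ‖T‖ⁿ⁻¹`, so a map with `‖T‖ⁿ ≤ C det T` satisfies `‖T‖ ≤ C ‖T u‖` for every unit
`u`. Applied to `T = L_{i_L}` and a unit `u ∈ V`, where `L_{i_L} u = R_{i_L} u` is small, this
gives `‖L‖ ≤ c ‖R‖` with `c = (1+ε)(1+7k√ε) · 5√k ε^{1/4} < 3/4`; symmetrically `‖R‖ ≤ c ‖L‖`,
which forces `L = 0`.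
-/

open Module

section

variable {E : Type*} [NormedAddCommGroup E] [InnerProductSpace ℝ E]

theorem LinearMap.abs_det_le_prod_norm_apply {n : ℕ} (b : OrthonormalBasis (Fin n) ℝ E)
    (T : E →ₗ[ℝ] E) : |LinearMap.det T| ≤ ∏ i, ‖T (b i)‖ := by
  have : Fact (finrank ℝ E = n) := ⟨by simpa using finrank_eq_card_basis b.toBasis⟩
  have hdet : LinearMap.det T = b.toBasis.det (T ∘ b) := by
    rw [b.toBasis.det_comp, ← b.coe_toBasis, b.toBasis.det_self, mul_one]
  rw [hdet, ← b.toBasis.orientation.volumeForm_robust' b]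
  exact b.toBasis.orientation.abs_volumeForm_apply_le _

variable [FiniteDimensional ℝ E]

theorem ContinuousLinearMap.abs_det_le_norm_apply_mul_opNorm_pow (T : E →L[ℝ] E) {v : E}
    (hv : ‖v‖ = 1) : |LinearMap.det (T : E →ₗ[ℝ] E)| ≤ ‖T v‖ * ‖T‖ ^ (finrank ℝ E - 1) := by
  have hpos : 0 < finrank ℝ E :=
    finrank_pos_iff_exists_ne_zero.2 ⟨v, norm_ne_zero_iff.1 (by simp [hv])⟩
  obtain ⟨m, hm⟩ := Nat.exists_eq_add_one_of_ne_zero hpos.ne'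
  have horth : Orthonormal ℝ (({0} : Set (Fin (m + 1))).domRestrict fun _ => v) :=
    ⟨fun _ => hv, fun i j hij => absurd (Subtype.ext (i.2.trans j.2.symm)) hij⟩
  obtain ⟨b, hb⟩ := horth.exists_orthonormalBasis_extension_of_card_eq (by simpa using hm)
  calc |LinearMap.det (T : E →ₗ[ℝ] E)| ≤ ∏ i, ‖T (b i)‖ :=
        LinearMap.abs_det_le_prod_norm_apply b _
    _ = ‖T v‖ * ∏ i : Fin m, ‖T (b i.succ)‖ := by rw [Fin.prod_univ_succ, hb 0 rfl]
    _ ≤ ‖T v‖ * ‖T‖ ^ (finrank ℝ E - 1) := by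
      rw [hm, Nat.add_sub_cancel]
      gcongr
      calc ∏ i : Fin m, ‖T (b i.succ)‖ ≤ ∏ _i : Fin m, ‖T‖ := by
            gcongr with i
            simpa [b.orthonormal.1] using T.le_opNorm (b i.succ)
        _ = ‖T‖ ^ m := by simp

theorem ContinuousLinearMap.opNorm_le_mul_norm_apply_of_opNorm_pow_le_det {T : E →L[ℝ] E}
    {C : ℝ} (hC : 0 ≤ C) (hT : ‖T‖ ^ finrank ℝ E ≤ C * LinearMap.det (T : E →ₗ[ℝ] E))
    {v : E} (hv : ‖v‖ = 1) : ‖T‖ ≤ C * ‖T v‖ := by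
  rcases (norm_nonneg T).eq_or_lt with hT0 | hTpos
  · rw [← hT0]; positivity
  have hpos : 0 < finrank ℝ E :=
    finrank_pos_iff_exists_ne_zero.2 ⟨v, norm_ne_zero_iff.1 (by simp [hv])⟩
  refine le_of_mul_le_mul_right ?_ (pow_pos hTpos (finrank ℝ E - 1))
  calc ‖T‖ * ‖T‖ ^ (finrank ℝ E - 1) = ‖T‖ ^ finrank ℝ E := by
        rw [← pow_succ', Nat.sub_add_cancel hpos]
    _ ≤ C * |LinearMap.det (T : E →ₗ[ℝ] E)| := hT.trans (by gcongr; exact le_abs_self _)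
    _ ≤ C * (‖T v‖ * ‖T‖ ^ (finrank ℝ E - 1)) := by
        gcongr; exact T.abs_det_le_norm_apply_mul_opNorm_pow hv
    _ = C * ‖T v‖ * ‖T‖ ^ (finrank ℝ E - 1) := by ring

theorem ContinuousLinearMap.opNorm_le_mul_opNorm_of_apply_eq {ι : Type*} [Fintype ι]
    {L R : E →L[ℝ] PiLp 2 (fun _ : ι => E)} {Li Ri : ι → E →L[ℝ] E}
    (hLi : ∀ i v, Li i v = L v i) (hRi : ∀ i v, Ri i v = R v i)
    {u : E} (hu : ‖u‖ = 1) (hLRu : L u = R u) {i : ι} {a C s : ℝ} (ha : 0 ≤ a) (hC : 0 ≤ C)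
    (hLq : ‖Li i‖ ^ finrank ℝ E ≤ C * LinearMap.det (Li i : E →ₗ[ℝ] E))
    (hLn : ‖L‖ ≤ a * ‖Li i‖) (hRs : ‖Ri i‖ ≤ s * ‖R‖) :
    ‖L‖ ≤ a * C * s * ‖R‖ := by
  have hu_eq : Li i u = Ri i u := by rw [hLi, hRi, hLRu]
  calc ‖L‖ ≤ a * ‖Li i‖ := hLn
    _ ≤ a * (C * ‖Li i u‖) := by
        gcongr; exact opNorm_le_mul_norm_apply_of_opNorm_pow_le_det hC hLq hu
    _ ≤ a * (C * ‖Ri i‖) := by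
        gcongr; simpa [hu_eq, hu] using (Ri i).le_opNorm u
    _ ≤ a * (C * (s * ‖R‖)) := by gcongr
    _ = a * C * s * ‖R‖ := by ring

end

theorem adjacent_simplices_same_index_general (n k : ℕ) (hn : 3 ≤ n)
    (ε : ℝ) (hε : 0 < ε)
    (hε₁ : (1 + ε) * (1 + 7 * k * Real.sqrt ε) < 3 / 2)
    (hε₂ : 5 * Real.sqrt k * ε ^ ((1 : ℝ) / 4) < 1 / 2)
    (V : Submodule ℝ (EuclideanSpace ℝ (Fin n)))
    (hV : Module.finrank ℝ V = n - 1)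
    (L R : EuclideanSpace ℝ (Fin n) →L[ℝ]
        PiLp 2 (fun _ : Fin k => EuclideanSpace ℝ (Fin n)))
    (Li Ri : Fin k → (EuclideanSpace ℝ (Fin n) →L[ℝ] EuclideanSpace ℝ (Fin n)))
    (hLi : ∀ i v, Li i v = L v i) (hRi : ∀ i v, Ri i v = R v i)
    (hL0 : L ≠ 0)
    (hagree : ∀ v ∈ V, L v = R v)
    (iL iR : Fin k)
    (hLq : ‖Li iL‖ ^ n ≤ (1 + 7 * k * Real.sqrt ε) * LinearMap.det
        ((Li iL : EuclideanSpace ℝ (Fin n) →ₗ[ℝ] EuclideanSpace ℝ (Fin n))))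
    (hLn : ‖L‖ ≤ (1 + ε) * ‖Li iL‖)
    (hRL : ‖Ri iL‖ ≤ 5 * Real.sqrt k * ε ^ ((1 : ℝ) / 4) * ‖R‖)
    (hRq : ‖Ri iR‖ ^ n ≤ (1 + 7 * k * Real.sqrt ε) * LinearMap.det
        ((Ri iR : EuclideanSpace ℝ (Fin n) →ₗ[ℝ] EuclideanSpace ℝ (Fin n))))
    (hRn : ‖R‖ ≤ (1 + ε) * ‖Ri iR‖)
    (hLR : ‖Li iR‖ ≤ 5 * Real.sqrt k * ε ^ ((1 : ℝ) / 4) * ‖L‖) :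
    False := by
  obtain ⟨v, hvV, hv0⟩ : ∃ v ∈ V, v ≠ 0 := Submodule.exists_mem_ne_zero_of_ne_bot fun hV0 => by
    rw [hV0, finrank_bot] at hV; omega
  have hu : ‖‖v‖⁻¹ • v‖ = 1 := norm_smul_inv_norm hv0
  have hLRu := hagree _ (V.smul_mem ‖v‖⁻¹ hvV)
  have hdim : finrank ℝ (EuclideanSpace ℝ (Fin n)) = n := finrank_euclideanSpace_fin
  have hs0 : 0 ≤ 5 * Real.sqrt k * ε ^ ((1 : ℝ) / 4) := by positivity
  obtain ⟨c, hc0, hc1, hLR', hRL'⟩ : ∃ c : ℝ, 0 ≤ c ∧ c < 1 ∧ ‖L‖ ≤ c * ‖R‖ ∧ ‖R‖ ≤ c * ‖L‖ :=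
    ⟨(1 + ε) * (1 + 7 * k * Real.sqrt ε) * (5 * Real.sqrt k * ε ^ ((1 : ℝ) / 4)), by positivity,
      by nlinarith [mul_le_mul hε₁.le hε₂.le hs0 (by norm_num)],
      ContinuousLinearMap.opNorm_le_mul_opNorm_of_apply_eq hLi hRi hu hLRu (by positivity)
        (by positivity) (by rwa [hdim]) hLn hRL,
      ContinuousLinearMap.opNorm_le_mul_opNorm_of_apply_eq hRi hLi hu hLRu.symm (by positivity)
        (by positivity) (by rwa [hdim]) hRn hLR⟩
  have hLc : ‖L‖ ≤ c * c * ‖L‖ := hLR'.trans (by rw [mul_assoc]; gcongr)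
  have hcc : c * c < 1 := mul_lt_one_of_nonneg_of_lt_one_left hc0 hc1 hc1.le
  exact hL0 (norm_eq_zero.1 (by nlinarith [norm_nonneg L]))

/-- Piecewise-affine rigidity (key step of Proposition 10.2): if two nonzero linear maps
`L, R : ℝⁿ → (ℝⁿ)^k` agree on a hyperplane `V` (spanned by the common `(n−1)`-face of two
`n`-simplices), `ε` is small enough that `(1+ε)(1+7k√ε) < 3/2` and `5√k ε^{1/4} < 1/2`, and
both maps have distinguished quasiregular indices `i_L ≠ i_R` with the listed estimates, then
a contradiction follows; hence `i_L = i_R`. -/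
theorem adjacent_simplices_same_index (n k : ℕ) (hn : 3 ≤ n) (hk : 1 ≤ k)
    (ε : ℝ) (hε : 0 < ε)
    (hε₁ : (1 + ε) * (1 + 7 * k * Real.sqrt ε) < 3 / 2)
    (hε₂ : 5 * Real.sqrt k * ε ^ ((1 : ℝ) / 4) < 1 / 2)
    (V : Submodule ℝ (EuclideanSpace ℝ (Fin n)))
    (hV : Module.finrank ℝ V = n - 1)
    (L R : EuclideanSpace ℝ (Fin n) →L[ℝ]
        PiLp 2 (fun _ : Fin k => EuclideanSpace ℝ (Fin n)))
    (Li Ri : Fin k → (EuclideanSpace ℝ (Fin n) →L[ℝ] EuclideanSpace ℝ (Fin n)))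
    (hLi : ∀ i v, Li i v = L v i) (hRi : ∀ i v, Ri i v = R v i)
    (hL0 : L ≠ 0) (hR0 : R ≠ 0)
    (hagree : ∀ v ∈ V, L v = R v)
    (iL iR : Fin k) (hne : iL ≠ iR)
    (hLq : ‖Li iL‖ ^ n ≤ (1 + 7 * k * Real.sqrt ε) * LinearMap.det
        ((Li iL : EuclideanSpace ℝ (Fin n) →ₗ[ℝ] EuclideanSpace ℝ (Fin n))))
    (hLn : ‖L‖ ≤ (1 + ε) * ‖Li iL‖)
    (hRL : ‖Ri iL‖ ≤ 5 * Real.sqrt k * ε ^ ((1 : ℝ) / 4) * ‖R‖)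
    (hRq : ‖Ri iR‖ ^ n ≤ (1 + 7 * k * Real.sqrt ε) * LinearMap.det
        ((Ri iR : EuclideanSpace ℝ (Fin n) →ₗ[ℝ] EuclideanSpace ℝ (Fin n))))
    (hRn : ‖R‖ ≤ (1 + ε) * ‖Ri iR‖)
    (hLR : ‖Li iR‖ ≤ 5 * Real.sqrt k * ε ^ ((1 : ℝ) / 4) * ‖L‖) :
    False :=
  adjacent_simplices_same_index_general n k hn ε hε hε₁ hε₂ V hV L R Li Ri hLi hRi hL0 hagree iL iR
    hLq hLn hRL hRq hRn hLR
end
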